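/- arXiv:1806.02270 — 4 statements merged into one kernel-verified Lean document; each statement's English description precedes it below -/
import Mathlib

section
/- For the parametrized curve α(y) = 2y − 4y² − 9a y⁴, β(y) = −2y³ − 6a y⁵ (y near 0), one has β = −(1/4)α³ − (3/4)α⁴ + O(α⁵) as y → 0. -/
open Filter Topology Asymptotics

/-- Semi-cusp locus: along α(y)=2y−4y²−9ay⁴, β(y)=−2y³−6ay⁵,
β = −(1/4)α³ − (3/4)α⁴ + O(α⁵) as y → 0. -/
theorem semi_cusp_elimination (a : ℝ) :
    (fun y : ℝ =>
        (-2*y^3 - 6*a*y^5)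
          - (-(1/4) * (2*y - 4*y^2 - 9*a*y^4)^3
             - (3/4) * (2*y - 4*y^2 - 9*a*y^4)^4))
      =O[𝓝 (0:ℝ)] (fun y : ℝ => (2*y - 4*y^2 - 9*a*y^4)^5) := by
  set P : ℝ → ℝ := fun y =>
    (-72 - 6*a) + (272 - 27*a)*y + (-384 - 108*a)*y^2 + (192 + 1188*a)*y^3
    + (-2592*a + (243/2)*a^2)*y^4 + (1728*a + 1215*a^2)*y^5 + (-5832*a^2)*y^6
    + (5832*a^2 - (729/4)*a^3)*y^7 + (-4374*a^3)*y^8 + (8748*a^3)*y^9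
    + ((19683/4)*a^4)*y^11 with hP
  set h : ℝ → ℝ := fun y => (2 - 4*y - 9*a*y^3)^5 with hh
  have hPcont : Continuous P := by fun_prop
  have hhcont : Continuous h := by fun_prop
  have h1 : P =O[𝓝 (0:ℝ)] (fun _ => (1:ℝ)) :=
    (hPcont.tendsto 0).isBigO_one ℝ
  have h2 : (fun _ : ℝ => (1:ℝ)) =O[𝓝 (0:ℝ)] h := by
    have hev : ∀ᶠ y in 𝓝 (0:ℝ), (1:ℝ) < h y := by
      have : Tendsto h (𝓝 0) (𝓝 (h 0)) := (hhcont.tendsto 0)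
      have h0 : h 0 = 32 := by norm_num [hh]
      rw [h0] at this
      exact this.eventually (eventually_gt_nhds (by norm_num))
    refine IsBigO.of_bound 1 ?_
    filter_upwards [hev] with y hy
    simp only [norm_one, one_mul, Real.norm_eq_abs]
    exact le_trans hy.le (le_abs_self _)
  have key : (fun y : ℝ => y^5 * P y) =O[𝓝 (0:ℝ)] (fun y : ℝ => y^5 * h y) :=
    (isBigO_refl (fun y : ℝ => y^5) _).mul (h1.trans h2)
  have e1 : (fun y : ℝ =>
        (-2*y^3 - 6*a*y^5)
          - (-(1/4) * (2*y - 4*y^2 - 9*a*y^4)^3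
             - (3/4) * (2*y - 4*y^2 - 9*a*y^4)^4)) = fun y : ℝ => y^5 * P y := by
    funext y; simp only [hP]; ring
  have e2 : (fun y : ℝ => (2*y - 4*y^2 - 9*a*y^4)^5) = fun y : ℝ => y^5 * h y := by
    funext y; simp only [hh]; ring
  rw [e1, e2]; exact key
end

section
/- Let γ(y) = (y(−2β + 3αy − 4y² + 5y³ + 7a y⁵), y²(−β + 2αy − 3y² + 4y³ + 6a y⁵)). Suppose for each small α there exists y = y(α) ≠ 0, depending smoothly on α with y(0) = 0, such that −2β + 3αy − 4y² + 5y³ + 7a y⁵ = 0 and −β + 2αy − 3y² + 4y³ + 6a y⁵ = 0. Then β = (1/4)α² + (1/8)α³ + O(α⁴). -/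
open Filter Topology Asymptotics

/-- Crosscap point on the double fold: if for each small α there is a smooth nonzero
solution y(α) of the system, then β(α) = (1/4)α² + (1/8)α³ + O(α⁴). -/
theorem crosscap_on_double_fold (a : ℝ) (β y : ℝ → ℝ)
    (hy : ContDiff ℝ (⊤ : ℕ∞) y) (hy0 : y 0 = 0)
    (hyne : ∀ᶠ α in 𝓝 (0:ℝ), α ≠ 0 → y α ≠ 0)
    (heq1 : ∀ᶠ α in 𝓝 (0:ℝ),
      -2*β α + 3*α*(y α) - 4*(y α)^2 + 5*(y α)^3 + 7*a*(y α)^5 = 0)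
    (heq2 : ∀ᶠ α in 𝓝 (0:ℝ),
      -β α + 2*α*(y α) - 3*(y α)^2 + 4*(y α)^3 + 6*a*(y α)^5 = 0) :
    (fun α => β α - (1/4)*α^2 - (1/8)*α^3) =O[𝓝 (0:ℝ)] (fun α => α^4) := by
  set P : ℝ → ℝ := fun t => 9/4 + (a - 27/4)*t + (27/8)*t^2 - (45/2)*a*t^3
      + (135/8*a - 25/4*a^2)*t^4 - (75/4)*a^2*t^5 + (225/8)*a^2*t^6 + (125/8)*a^3*t^8
    with hPdef
  have hyc : Continuous y := hy.continuous
  have hycont : Tendsto y (𝓝 0) (𝓝 0) := by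
    have := hyc.tendsto 0; rwa [hy0] at this
  have hPcont : Continuous P := by rw [hPdef]; continuity
  -- eventually |P (y α)| ≤ |P 0| + 1
  have hPb : ∀ᶠ α in 𝓝 (0:ℝ), |P (y α)| ≤ |P 0| + 1 := by
    have h1 : Tendsto (fun α => |P (y α)|) (𝓝 0) (𝓝 (|P 0|)) :=
      ((hPcont.tendsto 0).comp hycont).abs
    exact h1.eventually_le_const (by linarith [abs_nonneg (P 0)])
  -- eventually |3 y + 5 a y³| < 1
  have hsmall : ∀ᶠ α in 𝓝 (0:ℝ), |3*(y α) + 5*a*(y α)^3| < 1 := by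
    have h2 : Tendsto (fun α => |3*(y α) + 5*a*(y α)^3|) (𝓝 0) (𝓝 0) := by
      have : Tendsto (fun α => 3*(y α) + 5*a*(y α)^3) (𝓝 0) (𝓝 (3*0 + 5*a*0^3)) := by
        exact Tendsto.add (hycont.const_mul 3) (((hycont.pow 3)).const_mul (5*a))
      simpa using this.abs
    exact h2.eventually_lt_const (by norm_num)
  rw [isBigO_iff]
  refine ⟨|P 0| + 1, ?_⟩
  filter_upwards [heq1, heq2, hyne, hPb, hsmall] with α h1 h2 hne hpb hsm
  -- key: identity and |y α| ≤ |α|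
  have key : β α - (1/4)*α^2 - (1/8)*α^3 = (y α)^4 * P (y α) ∧ |y α| ≤ |α| := by
    by_cases hα : α = 0
    · subst hα
      rw [hy0] at h2
      norm_num at h2
      rw [hy0, h2]
      norm_num
    · have hyne' : y α ≠ 0 := hne hα
      have h0 : y α * (-α + 2*(y α) - 3*(y α)^2 - 5*a*(y α)^4) = 0 := by
        linear_combination h1 - 2*h2
      have hfac : -α + 2*(y α) - 3*(y α)^2 - 5*a*(y α)^4 = 0 :=
        (mul_eq_zero.mp h0).resolve_left hyne'
      have hα2 : α = 2*(y α) - 3*(y α)^2 - 5*a*(y α)^4 := by linarith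
      constructor
      · simp only [hPdef]
        linear_combination (-1)*h2 + (α^2/8 + (1/4 + (2*(y α) - 3*(y α)^2 - 5*a*(y α)^4)/8)*α
          - 2*(y α) + (2*(y α) - 3*(y α)^2 - 5*a*(y α)^4)/4
          + (2*(y α) - 3*(y α)^2 - 5*a*(y α)^4)^2/8) * hfac
      · have hmul : α = y α * (2 - (3*(y α) + 5*a*(y α)^3)) := by
          linear_combination -hfac
        have habs : |α| = |y α| * |2 - (3*(y α) + 5*a*(y α)^3)| :=
          (congrArg abs hmul).trans (abs_mul _ _)
        have h2s : (1:ℝ) ≤ |2 - (3*(y α) + 5*a*(y α)^3)| := by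
          have hd := abs_sub_abs_le_abs_sub (2:ℝ) (3*(y α) + 5*a*(y α)^3)
          have h2' : |(2:ℝ)| = 2 := by norm_num
          rw [h2'] at hd
          linarith
        calc |y α| = |y α| * 1 := by ring
          _ ≤ |y α| * |2 - (3*(y α) + 5*a*(y α)^3)| :=
              mul_le_mul_of_nonneg_left h2s (abs_nonneg _)
          _ = |α| := habs.symm
  obtain ⟨hid, hyle⟩ := key
  rw [Real.norm_eq_abs, Real.norm_eq_abs, hid, abs_mul, abs_pow, abs_pow]
  calc |y α|^4 * |P (y α)| ≤ |α|^4 * (|P 0| + 1) := by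
        apply mul_le_mul (pow_le_pow_left₀ (abs_nonneg _) hyle 4) hpb (abs_nonneg _)
        positivity
    _ = (|P 0| + 1) * |α|^4 := by ring
end

section
/- Along the curve y = −3x² + x√(3ax + 9x² + 1), α(x) = −3x² − 2y and β(x) = −9a x² + 12xy − 4x, eliminating x yields β = 2α − (3/4)(a−2)α² − (9/16)a(a−2)α³ − (27/64)(2a³ − 5a² + a + 2)α⁴ + O(α⁵) as x → 0. -/
open Filter Topology Asymptotics

set_option maxHeartbeats 1600000

noncomputable def beaksA1 (a x : ℝ) : ℝ := (-4/1:ℝ) + (-12/1:ℝ) * x^1 + (-36/1:ℝ) * x^2 + (-54/1:ℝ) * x^3 + (1701/4:ℝ) * x^5 + (89667/32:ℝ) * x^7 + (-6/1:ℝ) * a^1 * x^1 + (-18/1:ℝ) * a^1 * x^2 + (81/1:ℝ) * a^1 * x^4 + (-729/4:ℝ) * a^1 * x^5 + (5103/4:ℝ) * a^1 * x^6 + (89667/64:ℝ) * a^1 * x^7 + (9/1:ℝ) * a^2 * x^2 + (-27/2:ℝ) * a^2 * x^3 + (-81/1:ℝ) * a^2 * x^4 + (-11907/16:ℝ) * a^2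 * x^5 + (5103/8:ℝ) * a^2 * x^6 + (-448335/64:ℝ) * a^2 * x^7 + (27/2:ℝ) * a^3 * x^3 + (-567/4:ℝ) * a^3 * x^4 + (486/1:ℝ) * a^3 * x^5 + (-25515/8:ℝ) * a^3 * x^6 + (89667/32:ℝ) * a^3 * x^7 + (81/1:ℝ) * a^4 * x^4 + (-1215/4:ℝ) * a^4 * x^5 + (5103/4:ℝ) * a^4 * x^6 + (243/2:ℝ) * a^5 * x^5

noncomputable def beaksB1 (a x : ℝ) : ℝ := (4/1:ℝ) + (12/1:ℝ) * x^1 + (18/1:ℝ) * x^2 + (-81/1:ℝ) * x^4 + (-3645/4:ℝ) * x^6 + (405/4:ℝ) * a^1 * x^4 + (-243/1:ℝ) * a^1 * x^5 + (-3645/8:ℝ) * a^1 * x^6 + (-9/2:ℝ) * a^2 * x^2 + (27/1:ℝ) * a^2 * x^3 + (1053/8:ℝ) * a^2 * x^4 + (-243/2:ℝ) * a^2 * x^5 + (18225/8:ℝ) * a^2 * x^6 + (-27/2:ℝ) * a^3 * x^3 + (-81/1:ℝ) * a^3 * x^4 + (1215/2:ℝ) * a^3 * x^5 + (-3645/4:ℝ)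 * a^3 * x^6 + (-243/1:ℝ) * a^4 * x^5

noncomputable def beaksR (a x : ℝ) : ℝ := (324/1:ℝ) + (-1458/1:ℝ) * x^1 + (5832/1:ℝ) * x^2 + (-54675/4:ℝ) * x^3 + (19683/4:ℝ) * x^4 + (-19683/4:ℝ) * x^5 + (-531441/16:ℝ) * x^6 + (14348907/64:ℝ) * x^8 + (387420489/1024:ℝ) * x^10 + (-810/1:ℝ) * a^1 + (1944/1:ℝ) * a^1 * x^1 + (-12393/1:ℝ) * a^1 * x^2 + (-54675/8:ℝ) * a^1 * x^3 + (45927/4:ℝ) * a^1 * x^4 + (-216513/4:ℝ) * a^1 * x^5 + (1594323/16:ℝ) * a^1 * x^6 + (4782969/16:ℝ) * a^1 * x^7 + (43046721/128:ℝ) * a^1 * x^8 + (43046721/64:ℝ) * a^1 * x^9 + (387420489/1024:ℝ) * a^1 * x^10 + (-567/1:ℝ) * a^2 + (729/2:ℝ) * a^2 * x^1 + (-16767/1:ℝ) * a^2 * x^2 + (360855/8:ℝ) * a^2 * x^3 + (-72171/1:ℝ) * a^2 * x^4 + (807003/8:ℝ) * a^2 * x^5 + (1594323/16:ℝ) * a^2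 * x^6 + (14348907/32:ℝ) * a^2 * x^7 + (-157837977/256:ℝ) * a^2 * x^8 + (43046721/64:ℝ) * a^2 * x^9 + (-7360989291/4096:ℝ) * a^2 * x^10 + (1296/1:ℝ) * a^3 + (-6075/1:ℝ) * a^3 * x^1 + (63423/2:ℝ) * a^3 * x^2 + (-45927/1:ℝ) * a^3 * x^3 + (242757/8:ℝ) * a^3 * x^4 + (1121931/32:ℝ) * a^3 * x^5 + (-7971615/64:ℝ) * a^3 * x^6 + (-82373355/64:ℝ) * a^3 * x^7 + (14348907/512:ℝ) * a^3 * x^8 + (-817887699/256:ℝ) * a^3 * x^9 + (-387420489/2048:ℝ) * a^3 * x^10 + (-1701/4:ℝ) * a^4 + (6561/1:ℝ) * a^4 * x^1 + (-95499/8:ℝ) * a^4 * x^2 + (54675/8:ℝ) * a^4 * x^3 + (5058531/64:ℝ) * a^4 * x^4 + (-9506889/32:ℝ) * a^4 * x^5 + (-27575883/256:ℝ) * a^4 * x^6 + (-54738423/128:ℝ) * a^4 * x^7 + (-129140163/512:ℝ) * a^4 * x^8 + (-43046721/128:ℝ) * a^4 * x^9 + (11235194181/4096:ℝ) * a^4 *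 x^10 + (-7533/4:ℝ) * a^5 * x^1 + (1458/1:ℝ) * a^5 * x^2 + (28431/1:ℝ) * a^5 * x^3 + (-2027349/16:ℝ) * a^5 * x^4 + (23481819/64:ℝ) * a^5 * x^5 + (-32535999/64:ℝ) * a^5 * x^6 + (239679891/128:ℝ) * a^5 * x^7 + (-358722675/256:ℝ) * a^5 * x^8 + (1248354909/256:ℝ) * a^5 * x^9 + (-1937102445/1024:ℝ) * a^5 * x^10 + (-729/2:ℝ) * a^6 * x^2 + (-80919/4:ℝ) * a^6 * x^3 + (1804275/16:ℝ) * a^6 * x^4 + (-1121931/4:ℝ) * a^6 * x^5 + (2184813/2:ℝ) * a^6 * x^6 + (-104693877/64:ℝ) * a^6 * x^7 + (444816117/128:ℝ) * a^6 * x^8 + (-215233605/64:ℝ) * a^6 * x^9 + (387420489/1024:ℝ) * a^6 * x^10 + (15309/4:ℝ) * a^7 * x^3 + (-216513/4:ℝ) * a^7 * x^4 + (1673055/8:ℝ) * a^7 * x^5 + (-11278359/16:ℝ) * a^7 * x^6 + (10097379/8:ℝ) * a^7 * x^7 + (-71744535/32:ℝ) * a^7 * x^8 + (43046721/64:ℝ)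 * a^7 * x^9 + (19683/2:ℝ) * a^8 * x^4 + (-413343/4:ℝ) * a^8 * x^5 + (3838185/16:ℝ) * a^8 * x^6 + (-2657205/4:ℝ) * a^8 * x^7 + (14348907/32:ℝ) * a^8 * x^8 + (19683/1:ℝ) * a^9 * x^5 + (-295245/4:ℝ) * a^9 * x^6 + (531441/4:ℝ) * a^9 * x^7 + (59049/4:ℝ) * a^10 * x^6

lemma beaksA1_cont (a : ℝ) : Continuous (beaksA1 a) := by
  unfold beaksA1; fun_prop

lemma beaksB1_cont (a : ℝ) : Continuous (beaksB1 a) := by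
  unfold beaksB1; fun_prop

lemma beaksR_cont (a : ℝ) : Continuous (beaksR a) := by
  unfold beaksR; fun_prop

lemma beaks_key1 (a x sx : ℝ) (hx : sx^2 = 3*a*x + 9*x^2 + 1) :
    (-9*a*x^2 + 12*x*(-3*x^2 + x * sx) - 4*x)
      - (2*(-3*x^2 - 2*(-3*x^2 + x * sx))
         - (3/4)*(a-2)*(-3*x^2 - 2*(-3*x^2 + x * sx))^2
         - (9/16)*a*(a-2)*(-3*x^2 - 2*(-3*x^2 + x * sx))^3
         - (27/64)*(2*a^3 - 5*a^2 + a + 2)*(-3*x^2 - 2*(-3*x^2 + x * sx))^4)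
    = x * (beaksA1 a x + beaksB1 a x * sx) := by
  simp only [beaksA1, beaksB1]
  linear_combination ((-6/1:ℝ) * x^2 + (27/2:ℝ) * x^4 + (27/2:ℝ) * x^4 * sx^2 + (-81/1:ℝ) * x^5 * sx^1 + (1215/4:ℝ) * x^6 + (3/1:ℝ) * a^1 * x^2 + (9/1:ℝ) * a^1 * x^3 * sx^1 + (-135/4:ℝ) * a^1 * x^4 + (27/4:ℝ) * a^1 * x^4 * sx^2 + (81/2:ℝ) * a^1 * x^5 + (-81/2:ℝ) * a^1 * x^5 * sx^1 + (1215/8:ℝ) * a^1 * x^6 + (-9/2:ℝ) * a^2 * x^3 * sx^1 + (-27/2:ℝ) * a^2 * x^4 + (-135/4:ℝ) * a^2 * x^4 * sx^2 + (81/4:ℝ) * a^2 * x^5 + (405/2:ℝ) * a^2 * x^5 * sx^1 + (-6075/8:ℝ) * a^2 * x^6 + (27/2:ℝ) * a^3 * x^4 + (27/2:ℝ) * a^3 * x^4 * sx^2 + (-405/4:ℝ) * a^3 * x^5 + (-81/1:ℝ) * a^3 * x^5 * sx^1 + (1215/4:ℝ) * a^3 * x^6 + (81/2:ℝ) * a^4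 * x^5) * hx

lemma beaks_key2 (a x sx : ℝ) (hx : sx^2 = 3*a*x + 9*x^2 + 1) :
    (beaksA1 a x + beaksB1 a x * sx) * (beaksA1 a x - beaksB1 a x * sx)
      = x^4 * beaksR a x := by
  simp only [beaksA1, beaksB1, beaksR]
  linear_combination (-((4/1:ℝ) + (12/1:ℝ) * x^1 + (18/1:ℝ) * x^2 + (-81/1:ℝ) * x^4 + (-3645/4:ℝ) * x^6 + (405/4:ℝ) * a^1 * x^4 + (-243/1:ℝ) * a^1 * x^5 + (-3645/8:ℝ) * a^1 * x^6 + (-9/2:ℝ) * a^2 * x^2 + (27/1:ℝ) * a^2 * x^3 + (1053/8:ℝ) * a^2 * x^4 + (-243/2:ℝ) * a^2 * x^5 + (18225/8:ℝ) * a^2 * x^6 + (-27/2:ℝ) * a^3 * x^3 + (-81/1:ℝ) * a^3 * x^4 + (1215/2:ℝ) * a^3 * x^5 + (-3645/4:ℝ) * a^3 * x^6 + (-243/1:ℝ) * a^4 * x^5)^2) * hx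

/-- Beaks curve expansion: along y(x) = −3x² + x√(3ax+9x²+1), α = −3x²−2y, β = −9ax²+12xy−4x,
one has β = 2α − (3/4)(a−2)α² − (9/16)a(a−2)α³ − (27/64)(2a³−5a²+a+2)α⁴ + O(α⁵). -/
theorem beaks_curve_expansion (a : ℝ) :
    (fun x : ℝ =>
      let y := -3*x^2 + x * Real.sqrt (3*a*x + 9*x^2 + 1)
      let α := -3*x^2 - 2*y
      let β := -9*a*x^2 + 12*x*y - 4*x
      β - (2*α - (3/4)*(a-2)*α^2 - (9/16)*a*(a-2)*α^3
            - (27/64)*(2*a^3 - 5*a^2 + a + 2)*α^4))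
      =O[𝓝 (0:ℝ)]
    (fun x : ℝ =>
      let y := -3*x^2 + x * Real.sqrt (3*a*x + 9*x^2 + 1)
      let α := -3*x^2 - 2*y
      α^5) := by
  set s : ℝ → ℝ := fun x => Real.sqrt (3*a*x + 9*x^2 + 1) with hs_def
  have hq_cont : ContinuousAt (fun x : ℝ => 3*a*x + 9*x^2 + 1) 0 := by fun_prop
  have hq_pos : ∀ᶠ x in 𝓝 (0:ℝ), 0 < 3*a*x + 9*x^2 + 1 := by
    have : {y : ℝ | 0 < y} ∈ 𝓝 ((fun x : ℝ => 3*a*x + 9*x^2 + 1) 0) := by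
      apply isOpen_lt continuous_const continuous_id |>.mem_nhds
      norm_num
    exact hq_cont.eventually_mem this
  have hsq : ∀ᶠ x in 𝓝 (0:ℝ), (s x)^2 = 3*a*x + 9*x^2 + 1 := by
    filter_upwards [hq_pos] with x hx
    exact Real.sq_sqrt hx.le
  have hs_cont : ContinuousAt s 0 := by
    exact Real.continuous_sqrt.continuousAt.comp hq_cont
  have hs0 : s 0 = 1 := by simp [hs_def]
  -- the denominator function
  have hden_cont : ContinuousAt (fun x => beaksA1 a x - beaksB1 a x * s x) 0 :=
    ContinuousAt.sub (beaksA1_cont a).continuousAt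
      (ContinuousAt.mul (beaksB1_cont a).continuousAt hs_cont)
  have hden0 : beaksA1 a 0 - beaksB1 a 0 * s 0 = -8 := by
    simp [beaksA1, beaksB1, hs0]; norm_num
  have hden_ne : ∀ᶠ x in 𝓝 (0:ℝ), beaksA1 a x - beaksB1 a x * s x ≠ 0 := by
    have : {y : ℝ | y ≠ 0} ∈ 𝓝 ((fun x => beaksA1 a x - beaksB1 a x * s x) 0) := by
      apply isOpen_ne.mem_nhds
      simp only [hden0]; norm_num
    exact hden_cont.eventually_mem this
  -- the bounded factor
  have hfac_cont : ContinuousAt (fun x => beaksR a x / (beaksA1 a x - beaksB1 a x * s x)) 0 := by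
    apply ContinuousAt.div (beaksR_cont a).continuousAt hden_cont
    simp only [hden0]; norm_num
  have hfac_O : (fun x => beaksR a x / (beaksA1 a x - beaksB1 a x * s x))
      =O[𝓝 (0:ℝ)] (fun _ => (1:ℝ)) := hfac_cont.tendsto.isBigO_one ℝ
  -- main O(x^5) estimate
  have hE : (fun x : ℝ =>
      (-9*a*x^2 + 12*x*(-3*x^2 + x * s x) - 4*x)
      - (2*(-3*x^2 - 2*(-3*x^2 + x * s x))
         - (3/4)*(a-2)*(-3*x^2 - 2*(-3*x^2 + x * s x))^2
         - (9/16)*a*(a-2)*(-3*x^2 - 2*(-3*x^2 + x * s x))^3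
         - (27/64)*(2*a^3 - 5*a^2 + a + 2)*(-3*x^2 - 2*(-3*x^2 + x * s x))^4))
      =O[𝓝 (0:ℝ)] (fun x : ℝ => x^5) := by
    have heq : (fun x : ℝ =>
        (-9*a*x^2 + 12*x*(-3*x^2 + x * s x) - 4*x)
        - (2*(-3*x^2 - 2*(-3*x^2 + x * s x))
           - (3/4)*(a-2)*(-3*x^2 - 2*(-3*x^2 + x * s x))^2
           - (9/16)*a*(a-2)*(-3*x^2 - 2*(-3*x^2 + x * s x))^3
           - (27/64)*(2*a^3 - 5*a^2 + a + 2)*(-3*x^2 - 2*(-3*x^2 + x * s x))^4))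
        =ᶠ[𝓝 (0:ℝ)]
        (fun x : ℝ => x^5 * (beaksR a x / (beaksA1 a x - beaksB1 a x * s x))) := by
      filter_upwards [hsq, hden_ne] with x hx hne
      rw [beaks_key1 a x (s x) hx]
      have h2 := beaks_key2 a x (s x) hx
      field_simp
      linear_combination x * h2
    have hprod : (fun x : ℝ => x^5 * (beaksR a x / (beaksA1 a x - beaksB1 a x * s x)))
        =O[𝓝 (0:ℝ)] (fun x : ℝ => x^5) := by
      have := (isBigO_refl (fun x : ℝ => x^5) (𝓝 (0:ℝ))).mul hfac_O
      simpa using this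
    exact hprod.congr' heq.symm Filter.EventuallyEq.rfl
  -- x^5 = O(α^5)
  have hx5 : (fun x : ℝ => x^5) =O[𝓝 (0:ℝ)]
      (fun x : ℝ => (-3*x^2 - 2*(-3*x^2 + x * s x))^5) := by
    have hg_cont : ContinuousAt (fun x : ℝ => 3*x - 2 * s x) 0 := by
      exact ContinuousAt.sub (by fun_prop) (ContinuousAt.mul (by fun_prop) hs_cont)
    have hg_big : ∀ᶠ x in 𝓝 (0:ℝ), 1 ≤ |3*x - 2 * s x| := by
      have hmem : ∀ᶠ y in 𝓝 (-2:ℝ), 1 ≤ |y| := by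
        have : ∀ᶠ y in 𝓝 (-2:ℝ), y < -1 := eventually_lt_nhds (by norm_num)
        filter_upwards [this] with y hy
        rw [le_abs]; right; linarith
      have ht : Tendsto (fun x : ℝ => 3*x - 2 * s x) (𝓝 0) (𝓝 (-2)) := by
        have h0 : (fun x : ℝ => 3*x - 2 * s x) 0 = -2 := by simp [hs0]
        simpa [h0, hs0] using hg_cont.tendsto
      exact ht.eventually hmem
    rw [isBigO_iff]
    refine ⟨1, ?_⟩
    filter_upwards [hg_big] with x hx
    have h1 : ‖x^5‖ = |x|^5 := by rw [Real.norm_eq_abs, abs_pow]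
    have h2 : (-3*x^2 - 2*(-3*x^2 + x * s x)) = x * (3*x - 2 * s x) := by ring
    rw [h1, h2, Real.norm_eq_abs, abs_pow, abs_mul, one_mul, mul_pow]
    have hx5 : (0:ℝ) ≤ |x|^5 := by positivity
    have h3 : (1:ℝ) ≤ |3*x - 2*s x|^5 := by
      have := pow_le_pow_left₀ (by norm_num : (0:ℝ) ≤ 1) hx 5
      simpa using this
    nlinarith [h3, hx5]
  -- combine
  have final := hE.trans hx5
  exact final
end

section
/- Along y(x) = −2x² + x√(2ax + 4x² + 1), with α(x) = −x² − y(x) and β(x) = (−a x³ − x² − y(x)²)/x (x ≠ 0 small), one has β = 2α − (a − 2)α² + O(α³) as x → 0. -/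
open Filter Topology Asymptotics

set_option maxHeartbeats 1000000

private lemma dplus_key (a x s : ℝ) (hs : s^2 = 2*a*x + 4*x^2 + 1) :
    (-a*x^3 - x^2 - (-2*x^2 + x*s)^2
      - x*(2*(-x^2 - (-2*x^2 + x*s)) - (a - 2)*(-x^2 - (-2*x^2 + x*s))^2))
      * ((-2 - 4*x - 2*a*x - 8*x^2 - 4*a*x^2 + 2*a^2*x^2 - 10*x^3 + 5*a*x^3)
          - (2 + 4*x + 4*x^2 - 2*a*x^2)*s)
    = x^4 * ((8*a - 4*a^2) + (8 - 4*a + 16*a^2 - 8*a^3)*x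
        + (48*a - 8*a^2 - 16*a^3 + 4*a^4)*x^2
        + (32 + 32*a - 48*a^2 + 12*a^3)*x^3
        + (36 - 36*a + 9*a^2)*x^4) := by
  linear_combination (-2*x^2 + 2*x^2*s - 8*x^3 + 8*x^3*s - 2*a*x^3*s - 16*x^4 + 12*a*x^4
    - 4*a^2*x^4 + 12*x^4*s - 6*a*x^4*s - 6*x^5 + 11*a*x^5 - 8*a^2*x^5 + 2*a^3*x^5
    + 8*x^5*s - 8*a*x^5*s + 2*a^2*x^5*s + 4*x^6 - 4*a*x^6 + a^2*x^6) * hs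

/-- Along y(x) = −2x² + x√(2ax+4x²+1), α(x) = −x² − y(x), β(x) = (−ax³ − x² − y(x)²)/x,
one has β = 2α − (a − 2)α² + O(α³) as x → 0 (x ≠ 0). -/
theorem dplus_double_fold_expansion (a : ℝ) :
    (fun x : ℝ =>
      let y := -2*x^2 + x * Real.sqrt (2*a*x + 4*x^2 + 1)
      let α := -x^2 - y
      let β := (-a*x^3 - x^2 - y^2)/x
      β - (2*α - (a - 2)*α^2))
      =O[𝓝[≠] (0:ℝ)]
    (fun x : ℝ =>
      let y := -2*x^2 + x * Real.sqrt (2*a*x + 4*x^2 + 1)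
      let α := -x^2 - y
      α^3) := by
  have hscont : Continuous (fun x : ℝ => Real.sqrt (2*a*x + 4*x^2 + 1)) :=
    Real.continuous_sqrt.comp (by continuity)
  set s : ℝ → ℝ := fun x => Real.sqrt (2*a*x + 4*x^2 + 1) with hsdef
  set F : ℝ → ℝ := fun x =>
      (-a*x^3 - x^2 - (-2*x^2 + x*s x)^2)/x
        - (2*(-x^2 - (-2*x^2 + x*s x)) - (a - 2)*(-x^2 - (-2*x^2 + x*s x))^2) with hF
  set A : ℝ → ℝ := fun x => -x^2 - (-2*x^2 + x*s x) with hA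
  set D : ℝ → ℝ := fun x =>
      (-2 - 4*x - 2*a*x - 8*x^2 - 4*a*x^2 + 2*a^2*x^2 - 10*x^3 + 5*a*x^3)
        - (2 + 4*x + 4*x^2 - 2*a*x^2)*s x with hD
  set M : ℝ → ℝ := fun x =>
      (8*a - 4*a^2) + (8 - 4*a + 16*a^2 - 8*a^3)*x
        + (48*a - 8*a^2 - 16*a^3 + 4*a^4)*x^2
        + (32 + 32*a - 48*a^2 + 12*a^3)*x^3
        + (36 - 36*a + 9*a^2)*x^4 with hM
  have hs0 : s 0 = 1 := by simp [hsdef]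
  -- eventually facts
  have hppos : ∀ᶠ x in 𝓝[≠] (0:ℝ), 0 < 2*a*x + 4*x^2 + 1 := by
    apply eventually_nhdsWithin_of_eventually_nhds
    have ht : Filter.Tendsto (fun x : ℝ => 2*a*x + 4*x^2 + 1) (𝓝 0) (𝓝 1) := by
      have hc : Continuous (fun x : ℝ => 2*a*x + 4*x^2 + 1) := by continuity
      have := hc.tendsto 0
      norm_num at this
      exact this
    exact ht.eventually (eventually_gt_nhds one_pos)
  have hxne : ∀ᶠ x in 𝓝[≠] (0:ℝ), x ≠ 0 := eventually_mem_nhdsWithin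
  -- D tends to -4
  have hDt : Filter.Tendsto D (𝓝 0) (𝓝 (-4)) := by
    have hc : Continuous D := by
      apply Continuous.sub (by continuity)
      exact Continuous.mul (by continuity) hscont
    have h0 := hc.tendsto 0
    have hD0 : D 0 = -4 := by norm_num [hD, hs0]
    rwa [hD0] at h0
  have hDne : ∀ᶠ x in 𝓝[≠] (0:ℝ), D x ≠ 0 :=
    eventually_nhdsWithin_of_eventually_nhds
      (hDt.eventually (eventually_ne_nhds (by norm_num)))
  have hAt : Filter.Tendsto (fun x => x - s x) (𝓝 0) (𝓝 (-1)) := by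
    have hc : Continuous (fun x => x - s x) := continuous_id.sub hscont
    have h0 := hc.tendsto 0
    norm_num [hs0] at h0
    exact h0
  have hAne : ∀ᶠ x in 𝓝[≠] (0:ℝ), x - s x ≠ 0 :=
    eventually_nhdsWithin_of_eventually_nhds
      (hAt.eventually (eventually_ne_nhds (by norm_num)))
  -- Step 1 : F =O x^3
  have step1 : F =O[𝓝[≠] (0:ℝ)] (fun x : ℝ => x^3) := by
    apply isBigO_of_div_tendsto_nhds
      (hxne.mono fun x hx h => absurd h (pow_ne_zero _ hx)) (a^2 - 2*a)
    have hMt : Filter.Tendsto (fun x => M x / D x) (𝓝 0) (𝓝 (a^2 - 2*a)) := by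
      have hMc : Continuous M := by
        simp only [hM]; continuity
      have hdiv := (hMc.tendsto 0).div hDt (by norm_num)
      have hM0 : M 0 / (-4) = a^2 - 2*a := by
        simp only [hM]; norm_num; ring
      rwa [hM0] at hdiv
    apply Filter.Tendsto.congr' _ (hMt.mono_left nhdsWithin_le_nhds)
    filter_upwards [hppos, hxne, hDne] with x hp hx hDx
    have hsq : (s x)^2 = 2*a*x + 4*x^2 + 1 := Real.sq_sqrt hp.le
    have hkey := dplus_key a x (s x) hsq
    have hx3 : x^3 ≠ 0 := pow_ne_zero _ hx
    have hxF : x * F x = -a*x^3 - x^2 - (-2*x^2 + x*s x)^2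
        - x*(2*(-x^2 - (-2*x^2 + x*s x)) - (a - 2)*(-x^2 - (-2*x^2 + x*s x))^2) := by
      simp only [hF]
      field_simp
    show M x / D x = F x / x^3
    rw [div_eq_div_iff hDx hx3]
    apply mul_left_cancel₀ hx
    calc x * (M x * x ^ 3) = x^4 * M x := by ring
      _ = (-a*x^3 - x^2 - (-2*x^2 + x*s x)^2
            - x*(2*(-x^2 - (-2*x^2 + x*s x)) - (a - 2)*(-x^2 - (-2*x^2 + x*s x))^2)) * D x := by
          simp only [hD, hM]; exact hkey.symm
      _ = (x * F x) * D x := by rw [hxF]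
      _ = x * (F x * D x) := by ring
  -- Step 2 : x^3 =O A^3
  have step2 : (fun x : ℝ => x^3) =O[𝓝[≠] (0:ℝ)] (fun x => (A x)^3) := by
    have hAxeq : ∀ x, A x = x * (x - s x) := by
      intro x; simp only [hA]; ring
    apply isBigO_of_div_tendsto_nhds ?hgf (-1)
    · have ht : Filter.Tendsto (fun x => ((x - s x)^3)⁻¹) (𝓝 0) (𝓝 (-1)) := by
        have hinv := hAt.inv₀ (by norm_num : (-1:ℝ) ≠ 0)
        have hcube := hinv.pow 3
        norm_num at hcube
        exact hcube
      apply Filter.Tendsto.congr' _ (ht.mono_left nhdsWithin_le_nhds)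
      filter_upwards [hxne, hAne] with x hx hax
      show ((x - s x)^3)⁻¹ = x^3 / (A x)^3
      rw [hAxeq x]
      field_simp
    · filter_upwards [hxne, hAne] with x hx hax h
      exfalso
      have hne : A x ≠ 0 := by rw [hAxeq x]; exact mul_ne_zero hx hax
      exact hne (pow_eq_zero_iff (by norm_num : (3:ℕ) ≠ 0) |>.mp h)
  exact step1.trans step2
end
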